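/- Let f : ℝ → ℂ be (n+1)-times continuously differentiable on [a,b], and let the nodes be equally spaced: r_i = a + (i/n)(b-a) for i = 0,...,n. Then the Lagrange interpolant f_n satisfies max_{r∈[a,b]} |f(r) - f_n(r)| ≤ ((b-a)/n)^{n+1} · M / (4(n+1)), where M = max_{ξ∈[a,b]} |f^{(n+1)}(ξ)|. -/

import Mathlib

/-!
Pairing the error `f r - fn r` with a norming functional `L` reduces the estimate to the real
function `g = L ∘ f`, for which the classical remainder formula holds: if `P` interpolates `g`
at the nodes, `W = ∏ j, (X - r_j)` and `K` is chosen so that `g - P - K W` also vanishes at `r`,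
then this function has `n + 2` zeros in `[a, b]`, so by Rolle's theorem its `(n + 1)`-st
derivative `g⁽ⁿ⁺¹⁾ - (n + 1)! K` vanishes somewhere in `(a, b)`. Hence
`‖f r - fn r‖ ≤ M ∏ j, |r - r_j| / (n + 1)!`.

Writing `r = a + t h` with `h = (b - a) / n`, the node product is `h ^ (n + 1) ∏_{j ≤ n} |t - j|`,
and `∏_{j ≤ n} |t - j| ≤ n! / 4` for `t ∈ [0, n]` by induction on `n`: for `t ≤ n` the new factor
`|t - (n + 1)|` is at most `n + 1`, and `t ↦ n + 1 - t` permutes the factors and maps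
`[n, n + 1]` into `[0, 1]`.
-/

open Finset Set Polynomial
open scoped Nat

theorem exists_strictMono_deriv_eq_zero {k : ℕ} {g : ℝ → ℝ} {x : Fin (k + 2) → ℝ}
    (hx : StrictMono x) (hgx : ∀ i, g (x i) = 0)
    (hg : ContinuousOn g (Icc (x 0) (x (Fin.last _)))) :
    ∃ c : Fin (k + 1) → ℝ, StrictMono c ∧ (∀ i, c i ∈ Ioo (x i.castSucc) (x i.succ)) ∧
      ∀ i, deriv g (c i) = 0 := by
  have hx_mem : ∀ i, x i ∈ Icc (x 0) (x (Fin.last _)) := fun i =>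
    ⟨hx.monotone (Fin.zero_le i), hx.monotone (Fin.le_last i)⟩
  have rolle : ∀ i : Fin (k + 1), ∃ c ∈ Ioo (x i.castSucc) (x i.succ), deriv g c = 0 := fun i =>
    exists_deriv_eq_zero (hx Fin.castSucc_lt_succ)
      (hg.mono (Icc_subset_Icc (hx_mem _).1 (hx_mem _).2)) (by rw [hgx, hgx])
  choose c hc hc0 using rolle
  refine ⟨c, fun i j hij => ?_, hc, hc0⟩
  calc c i < x i.succ := (hc i).2
    _ ≤ x j.castSucc := hx.monotone (Fin.succ_le_castSucc_iff.2 hij)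
    _ < c j := (hc j).1

theorem exists_iterate_deriv_eq_zero_of_strictMono {k : ℕ} {g : ℝ → ℝ} {x : Fin (k + 2) → ℝ}
    (hx : StrictMono x) (hgx : ∀ i, g (x i) = 0)
    (hg : ContDiffOn ℝ k g (Icc (x 0) (x (Fin.last _)))) :
    ∃ ξ ∈ Ioo (x 0) (x (Fin.last _)), deriv^[k + 1] g ξ = 0 := by
  induction k generalizing g with
  | zero =>
    simpa using exists_deriv_eq_zero (hx (show (0 : Fin 2) < Fin.last 1 by decide))
      hg.continuousOn (by rw [hgx, hgx])
  | succ k ih =>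
    obtain ⟨c, hc, hcx, hc0⟩ := exists_strictMono_deriv_eq_zero hx hgx hg.continuousOn
    have hsub : Icc (c 0) (c (Fin.last _)) ⊆ Ioo (x 0) (x (Fin.last _)) :=
      Icc_subset_Ioo (hcx 0).1 (hcx _).2
    have hdg : ContDiffOn ℝ k (deriv g) (Ioo (x 0) (x (Fin.last _))) :=
      (hg.mono Ioo_subset_Icc_self).deriv_of_isOpen isOpen_Ioo (by push_cast; exact le_rfl)
    obtain ⟨ξ, hξ, hξ0⟩ := ih hc hc0 (hdg.mono hsub)
    exact ⟨ξ, hsub (Ioo_subset_Icc_self hξ), hξ0⟩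

theorem exists_iterate_deriv_eq_zero_of_card {k : ℕ} {g : ℝ → ℝ} {a b : ℝ} {s : Finset ℝ}
    (hs : #s = k + 2) (hsab : ∀ x ∈ s, x ∈ Icc a b) (hgs : ∀ x ∈ s, g x = 0)
    (hg : ContDiffOn ℝ k g (Icc a b)) : ∃ ξ ∈ Ioo a b, deriv^[k + 1] g ξ = 0 := by
  set x := s.orderEmbOfFin hs
  have hx_mem : ∀ i, x i ∈ Icc a b := fun i => hsab _ (s.orderEmbOfFin_mem hs i)
  obtain ⟨ξ, hξ, hξ0⟩ := exists_iterate_deriv_eq_zero_of_strictMono x.strictMono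
    (fun i => hgs _ (s.orderEmbOfFin_mem hs i))
    (hg.mono (Icc_subset_Icc (hx_mem _).1 (hx_mem _).2))
  exact ⟨ξ, Ioo_subset_Ioo (hx_mem _).1 (hx_mem _).2 hξ, hξ0⟩

theorem Polynomial.iteratedDeriv_eval {𝕜 : Type*} [NontriviallyNormedField 𝕜] (p : 𝕜[X]) (k : ℕ) :
    iteratedDeriv k (fun x => p.eval x) = fun x => (derivative^[k] p).eval x := by
  induction k generalizing p with
  | zero => simp
  | succ k ih =>
    have hd : _root_.deriv (fun x => p.eval x) = fun x => (derivative p).eval x := by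
      ext x
      exact Polynomial.deriv p
    rw [iteratedDeriv_succ', hd, ih, Function.iterate_succ_apply]

theorem Polynomial.iterate_derivative_of_natDegree_le {R : Type*} [Semiring R] {p : R[X]} {k : ℕ}
    (hp : p.natDegree ≤ k) : derivative^[k] p = C (k ! * p.coeff k) := by
  have hdeg : (derivative^[k] p).natDegree = 0 :=
    Nat.eq_zero_of_le_zero ((natDegree_iterate_derivative p k).trans (by omega))
  rw [eq_C_of_natDegree_eq_zero hdeg, coeff_iterate_derivative, zero_add, Nat.descFactorial_self,
    nsmul_eq_mul]

theorem Lagrange.exists_sub_eval_interpolate_eq {n : ℕ} {a b : ℝ} (hab : a < b) {g : ℝ → ℝ}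
    (hg : ContDiffOn ℝ (n + 1) g (Icc a b)) {v : Fin (n + 1) → ℝ} (hv : Function.Injective v)
    (hv_mem : ∀ i, v i ∈ Icc a b) {x : ℝ} (hx : x ∈ Icc a b) :
    ∃ ξ ∈ Ioo a b, g x - (interpolate univ v (g ∘ v)).eval x =
      iteratedDerivWithin (n + 1) g (Icc a b) ξ * (nodal univ v).eval x / (n + 1)! := by
  by_cases hx_node : ∃ i, x = v i
  · obtain ⟨i, rfl⟩ := hx_node
    refine ⟨(a + b) / 2, ⟨by linarith, by linarith⟩, ?_⟩
    rw [eval_interpolate_at_node _ hv.injOn (mem_univ i), eval_nodal_at_node (mem_univ i)]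
    simp
  push Not at hx_node
  set P := interpolate univ v (g ∘ v)
  set W := nodal univ v
  have hWx : W.eval x ≠ 0 := eval_nodal_not_at_node fun i _ => hx_node i
  set K := (g x - P.eval x) / W.eval x
  set Q := P + C K * W
  set e : ℝ → ℝ := fun y => g y - Q.eval y
  have he_node : ∀ i, e (v i) = 0 := fun i => by
    simp only [e, Q, eval_add, eval_mul, P, eval_interpolate_at_node _ hv.injOn (mem_univ i), W,
      eval_nodal_at_node (mem_univ i)]
    simp
  have hex : e x = 0 := by
    simp only [e, Q, eval_add, eval_mul, eval_C, K]
    field_simp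
    ring
  have hQ : derivative^[n + 1] Q = C ((n + 1)! * K) := by
    have hP : P.degree < ↑(n + 1) := by
      simpa only [card_univ, Fintype.card_fin] using
        degree_interpolate_lt (s := Finset.univ) (g ∘ v) hv.injOn
    have hW : W.natDegree = n + 1 := by simp [W, natDegree_nodal]
    have hW_lead : W.coeff (n + 1) = 1 := hW ▸ nodal_monic.coeff_natDegree
    have hQ_deg : Q.natDegree ≤ n + 1 := (natDegree_add_le _ _).trans
      (max_le (natDegree_le_of_degree_le hP.le) ((natDegree_C_mul_le _ _).trans hW.le))
    rw [iterate_derivative_of_natDegree_le hQ_deg, coeff_add, coeff_C_mul,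
      coeff_eq_zero_of_degree_lt hP, hW_lead, zero_add, mul_one]
  have hQ_smooth : ContDiff ℝ (n + 1) fun y => Q.eval y := by
    simpa using Q.contDiff_aeval (𝕜 := ℝ) (n + 1)
  set s := insert x (Finset.univ.image v)
  have hs : #s = n + 2 := by
    rw [card_insert_of_notMem (by simpa [eq_comm] using hx_node),
      Finset.card_image_of_injective _ hv, card_univ, Fintype.card_fin]
  obtain ⟨ξ, hξ, heξ⟩ := exists_iterate_deriv_eq_zero_of_card hs
    ((Finset.forall_mem_insert _ _ _).2 ⟨hx, Finset.forall_mem_image.2 fun i _ => hv_mem i⟩)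
    (by simpa [s] using ⟨hex, he_node⟩)
    ((hg.sub hQ_smooth.contDiffOn).of_le (by norm_cast; omega))
  have hgξ : ContDiffAt ℝ (n + 1) g ξ := hg.contDiffAt (Icc_mem_nhds hξ.1 hξ.2)
  rw [← iteratedDeriv_eq_iterate, iteratedDeriv_fun_sub hgξ hQ_smooth.contDiffAt,
    Polynomial.iteratedDeriv_eval, hQ] at heξ
  simp only [eval_C, sub_eq_zero] at heξ
  rw [← iteratedDerivWithin_eq_iteratedDeriv (uniqueDiffOn_Icc hab) hgξ (Ioo_subset_Icc_self hξ)]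
    at heξ
  refine ⟨ξ, hξ, ?_⟩
  rw [heξ, mul_assoc, mul_div_cancel_left₀ _ (Nat.cast_ne_zero.2 (Nat.factorial_ne_zero _)),
    div_mul_cancel₀ _ hWx]

theorem ContinuousLinearMap.iteratedDerivWithin_comp_left {F G : Type*} [NormedAddCommGroup F]
    [NormedSpace ℝ F] [NormedAddCommGroup G] [NormedSpace ℝ G] (L : F →L[ℝ] G) {f : ℝ → F}
    {s : Set ℝ} {x : ℝ} {n : ℕ} (hf : ContDiffWithinAt ℝ n f s x) (hs : UniqueDiffOn ℝ s)
    (hx : x ∈ s) : iteratedDerivWithin n (L ∘ f) s x = L (iteratedDerivWithin n f s x) := by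
  simp only [iteratedDerivWithin_eq_iteratedFDerivWithin,
    L.iteratedFDerivWithin_comp_left hf hs hx le_rfl]
  rfl

theorem Lagrange.eval_basis {F ι : Type*} [Field F] [DecidableEq ι] (s : Finset ι) (v : ι → F)
    (i : ι) (x : F) :
    (Lagrange.basis s v i).eval x = ∏ j ∈ s.erase i, (x - v j) / (v i - v j) := by
  simp only [Lagrange.basis, basisDivisor, eval_prod, eval_mul, eval_C, eval_sub, eval_X]
  exact prod_congr rfl fun j _ => inv_mul_eq_div _ _

theorem Lagrange.norm_sub_sum_eval_basis_smul_le {F : Type*} [NormedAddCommGroup F]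
    [NormedSpace ℝ F] {n : ℕ} {a b : ℝ} (hab : a < b) {f : ℝ → F}
    (hf : ContDiffOn ℝ (n + 1) f (Icc a b)) {v : Fin (n + 1) → ℝ} (hv : Function.Injective v)
    (hv_mem : ∀ i, v i ∈ Icc a b) {M : ℝ}
    (hM : ∀ ξ ∈ Ioo a b, ‖iteratedDerivWithin (n + 1) f (Icc a b) ξ‖ ≤ M) {x : ℝ}
    (hx : x ∈ Icc a b) :
    ‖f x - ∑ i, (Lagrange.basis univ v i).eval x • f (v i)‖ ≤
      M * (∏ i, |x - v i|) / (n + 1)! := by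
  set E := f x - ∑ i, (Lagrange.basis univ v i).eval x • f (v i)
  obtain ⟨L, hL_norm, hLE⟩ := exists_dual_vector'' ℝ E
  obtain ⟨ξ, hξ, hrem⟩ :=
    exists_sub_eval_interpolate_eq hab (hf.continuousLinearMap_comp L) hv hv_mem hx
  have hinterp : (interpolate univ v ((L ∘ f) ∘ v)).eval x =
      L (∑ i, (Lagrange.basis univ v i).eval x • f (v i)) := by
    simp [interpolate_apply, eval_finsetSum, mul_comm]
  have hE : ‖E‖ = (L ∘ f) x - (interpolate univ v ((L ∘ f) ∘ v)).eval x := by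
    rw [hinterp, Function.comp_apply, ← map_sub]
    exact hLE.symm
  have hderiv : |iteratedDerivWithin (n + 1) (L ∘ f) (Icc a b) ξ| ≤ M := by
    rw [L.iteratedDerivWithin_comp_left (hf.contDiffWithinAt (Ioo_subset_Icc_self hξ))
      (uniqueDiffOn_Icc hab) (Ioo_subset_Icc_self hξ), ← Real.norm_eq_abs]
    exact (L.le_of_opNorm_le hL_norm _).trans (by simpa using hM ξ hξ)
  set D := iteratedDerivWithin (n + 1) (L ∘ f) (Icc a b) ξ
  calc ‖E‖ = D * (nodal univ v).eval x / (n + 1)! := by rw [hE, hrem]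
    _ ≤ |D| * |(nodal univ v).eval x| / (n + 1)! := by
        rw [← abs_mul]
        gcongr
        exact le_abs_self _
    _ ≤ M * (∏ i, |x - v i|) / (n + 1)! := by
        rw [eval_nodal, abs_prod]
        gcongr

theorem prod_range_abs_sub_natCast_reflect (n : ℕ) (t : ℝ) :
    ∏ j ∈ range (n + 1), |(n - t) - j| = ∏ j ∈ range (n + 1), |t - j| := by
  rw [← prod_range_reflect (fun j : ℕ => |t - j|)]
  refine prod_congr rfl fun j hj => ?_
  rw [add_tsub_cancel_right, Nat.cast_sub (Nat.lt_succ_iff.1 (mem_range.1 hj)), abs_sub_comm]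
  ring_nf

theorem prod_range_abs_sub_natCast_le {n : ℕ} (hn : 1 ≤ n) {t : ℝ} (ht₀ : 0 ≤ t) (htn : t ≤ n) :
    ∏ j ∈ range (n + 1), |t - j| ≤ n ! / 4 := by
  induction n, hn using Nat.le_induction generalizing t with
  | base =>
    simp only [prod_range_succ, prod_range_zero, one_mul, Nat.cast_zero, sub_zero, Nat.cast_one,
      Nat.factorial_one]
    rw [abs_of_nonneg ht₀, abs_of_nonpos (by simpa using htn)]
    nlinarith [sq_nonneg (t - 1 / 2)]
  | succ n hn ih =>
    have hle : ∀ s : ℝ, 0 ≤ s → s ≤ n → ∏ j ∈ range (n + 2), |s - j| ≤ (n + 1)! / 4 := by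
      intro s hs₀ hsn
      have hlast : |s - (n + 1)| ≤ n + 1 := by
        rw [abs_of_nonpos (by linarith)]
        linarith
      rw [prod_range_succ, Nat.factorial_succ, Nat.cast_mul, Nat.cast_succ]
      calc (∏ j ∈ range (n + 1), |s - j|) * |s - (n + 1)| ≤ (n ! : ℝ) / 4 * (n + 1) :=
            mul_le_mul (ih hs₀ hsn) hlast (abs_nonneg _) (by positivity)
        _ = (n + 1) * n ! / 4 := by ring
    rcases le_total t n with htn' | hnt
    · exact hle t ht₀ htn'
    · rw [← prod_range_abs_sub_natCast_reflect]
      have hn1 : (1 : ℝ) ≤ n := by exact_mod_cast hn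
      exact hle _ (by push_cast at htn ⊢; linarith) (by push_cast; linarith)

theorem prod_abs_sub_equispaced_le {n : ℕ} (hn : 1 ≤ n) {a h x : ℝ} (hh : 0 < h)
    (hx : x ∈ Icc a (a + n * h)) :
    ∏ j : Fin (n + 1), |x - (a + j * h)| ≤ n ! / 4 * h ^ (n + 1) := by
  set t := (x - a) / h
  have hfactor : ∀ j : Fin (n + 1), |x - (a + j * h)| = |t - (j : ℕ)| * h := fun j => by
    rw [← abs_of_pos hh, ← abs_mul, abs_of_pos hh, sub_mul, div_mul_cancel₀ _ hh.ne']
    ring_nf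
  rw [prod_congr rfl fun j _ => hfactor j, prod_mul_distrib, prod_const, card_univ,
    Fintype.card_fin, Fin.prod_univ_eq_prod_range (fun j => |t - j|)]
  gcongr
  exact prod_range_abs_sub_natCast_le hn (div_nonneg (by linarith [hx.1]) hh.le)
    ((div_le_iff₀ hh).2 (by linarith [hx.2]))

/-- Uniform-sampling Lagrange interpolation error bound with equally spaced nodes. -/
theorem lagrange_error_bound_equispaced (n : ℕ) (hn : 0 < n) (a b : ℝ) (hab : a < b)
    (f : ℝ → ℂ) (hf : ContDiffOn ℝ (n + 1) f (Set.Icc a b))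
    (nodes : Fin (n + 1) → ℝ)
    (hnodes : ∀ i : Fin (n + 1), nodes i = a + ((i : ℝ) / n) * (b - a))
    (fn : ℝ → ℂ)
    (hfn : ∀ r, fn r = ∑ j, f (nodes j) *
      ((∏ m ∈ Finset.univ.filter (· ≠ j), (r - nodes m) / (nodes j - nodes m) : ℝ) : ℂ))
    (M : ℝ)
    (hM : ∀ ξ ∈ Set.Icc a b, ‖iteratedDerivWithin (n + 1) f (Set.Icc a b) ξ‖ ≤ M) :
    ∀ r ∈ Set.Icc a b,
      ‖f r - fn r‖ ≤ ((b - a) / n) ^ (n + 1) * M / (4 * (n + 1)) := by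
  intro r hr
  set h := (b - a) / n
  have hh : 0 < h := div_pos (sub_pos.2 hab) (by exact_mod_cast hn)
  have hb : b = a + n * h := by
    simp only [h]
    field_simp
    ring
  have hnodes' : ∀ i : Fin (n + 1), nodes i = a + i * h := fun i => by
    rw [hnodes]
    ring
  have hinj : Function.Injective nodes := fun i j hij => by
    rw [hnodes', hnodes'] at hij
    exact Fin.ext (by exact_mod_cast mul_right_cancel₀ hh.ne' (add_left_cancel hij))
  have hmem : ∀ i, nodes i ∈ Icc a b := fun i => by
    have hi : ((i : ℕ) : ℝ) ≤ n := by exact_mod_cast Nat.lt_succ_iff.1 i.isLt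
    rw [hnodes', hb]
    constructor <;> nlinarith
  have hfn' : fn r = ∑ i, (Lagrange.basis univ nodes i).eval r • f (nodes i) := by
    rw [hfn]
    refine sum_congr rfl fun i _ => ?_
    rw [Lagrange.eval_basis, ← filter_ne', Complex.real_smul, mul_comm]
  have hM₀ : 0 ≤ M := (norm_nonneg _).trans (hM a ⟨le_rfl, hab.le⟩)
  calc ‖f r - fn r‖ ≤ M * (∏ i, |r - nodes i|) / (n + 1)! := by
        rw [hfn']
        exact Lagrange.norm_sub_sum_eval_basis_smul_le hab hf hinj hmem
          (fun ξ hξ => hM ξ (Ioo_subset_Icc_self hξ)) hr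
    _ ≤ M * (n ! / 4 * h ^ (n + 1)) / (n + 1)! := by
        simp only [hnodes']
        gcongr
        exact prod_abs_sub_equispaced_le hn hh (hb ▸ hr)
    _ = h ^ (n + 1) * M / (4 * (n + 1)) := by
        rw [Nat.factorial_succ]
        push_cast
        field_simp
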